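/- arXiv:2411.14336 — 4 statements merged into one kernel-verified Lean document; each statement's English description precedes it below -/
import Mathlib

section
/- Let m ≥ 1 and let E_1, …, E_m be independent, identically distributed random variables on a probability space that are almost surely nonnegative. Then for every s ≥ 0, P(Σ_{j=1}^m E_j ≤ s) ≤ C(m, ⌈m/2⌉) · P(E_1 ≤ 2s/m)^{⌈m/2⌉}, where C(m, ⌈m/2⌉) is the binomial coefficient 'm choose ⌈m/2⌉'. (Indeed, if the sum is at most s then at most m/2 of the E_j can exceed 2s/m, so at least ⌈m/2⌉ of them are at most 2s/m.) -/
open MeasureTheory Finset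
open scoped ENNReal

/-!
If nonnegative numbers `x₁, …, xₙ` sum to at most `s`, at most `n / 2` of them can exceed
`2s / n`, so at least `⌈n/2⌉` of them are at most `2s / n`. The event `∑ⱼ Eⱼ ≤ s` is thus
covered, up to a null set, by the `C(m, ⌈m/2⌉)` events "`Eⱼ ≤ 2s/m` for all `j ∈ T`" with
`#T = ⌈m/2⌉`, and by independence each of them has probability `P(E₁ ≤ 2s/m)^⌈m/2⌉`.
-/

theorem add_one_div_two_le_card_filter_le_of_sum_le {ι : Type*} [Fintype ι] {x : ι → ℝ}
    (hx : ∀ i, 0 ≤ x i) {s : ℝ} (hs : ∑ i, x i ≤ s) :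
    (Fintype.card ι + 1) / 2 ≤ #{i | x i ≤ 2 * s / Fintype.card ι} := by
  set n := Fintype.card ι
  set c := 2 * s / n
  by_contra! h
  set B : Finset ι := {i | ¬x i ≤ c}
  have hsplit : #{i | x i ≤ c} + #B = n := card_filter_add_card_filter_not _
  have hnB : n < 2 * #B := by omega
  have hB : B.Nonempty := card_pos.mp (by omega)
  have hn : (0 : ℝ) < n := by exact_mod_cast (show 0 < n by omega)
  have hs₀ : 0 ≤ s := (sum_nonneg fun i _ => hx i).trans hs
  have hsc : s ≤ #B * c := by
    have : (n : ℝ) < 2 * #B := by exact_mod_cast hnB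
    rw [mul_div_assoc', le_div_iff₀ hn]
    nlinarith
  have hsum : #B * c < ∑ i, x i :=
    calc #B * c = ∑ _i ∈ B, c := by rw [sum_const, nsmul_eq_mul]
      _ < ∑ i ∈ B, x i := sum_lt_sum_of_nonempty hB fun i hi => not_le.mp (mem_filter.mp hi).2
      _ ≤ ∑ i, x i := sum_le_sum_of_subset_of_nonneg (subset_univ B) fun i _ _ => hx i
  linarith

theorem ProbabilityTheory.iIndepFun.measure_le_card_filter_mem_le {ι Ω β : Type*} [Fintype ι]
    [MeasurableSpace Ω] [MeasurableSpace β] {μ : Measure Ω} {X : ι → Ω → β}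
    (hX : iIndepFun X μ) {S : Set β} [DecidablePred (· ∈ S)]
    (hS : MeasurableSet S) {p : ℝ≥0∞} (hp : ∀ i, μ (X i ⁻¹' S) = p) (k : ℕ) :
    μ {ω | k ≤ #{i | X i ω ∈ S}} ≤ (Fintype.card ι).choose k * p ^ k := by
  have hcover : {ω | k ≤ #{i | X i ω ∈ S}} ⊆ ⋃ T ∈ powersetCard k univ, ⋂ i ∈ T, X i ⁻¹' S := by
    intro ω hω
    obtain ⟨T, hT, hTcard⟩ := exists_subset_card_eq hω
    refine Set.mem_biUnion (mem_powersetCard_univ.mpr hTcard) (Set.mem_iInter₂.mpr ?_)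
    exact fun i hi => (mem_filter.mp (hT hi)).2
  calc μ {ω | k ≤ #{i | X i ω ∈ S}}
      ≤ ∑ T ∈ powersetCard k univ, μ (⋂ i ∈ T, X i ⁻¹' S) :=
        (measure_mono hcover).trans (measure_biUnion_finset_le _ _)
    _ = ∑ T ∈ powersetCard k (univ : Finset ι), p ^ k := by
        refine sum_congr rfl fun T hT => ?_
        rw [hX.meas_biInter fun i _ => ⟨S, hS, rfl⟩, prod_congr rfl fun i _ => hp i, prod_const,
          mem_powersetCard_univ.mp hT]
    _ = (Fintype.card ι).choose k * p ^ k := by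
        rw [sum_const, card_powersetCard, card_univ, nsmul_eq_mul]

theorem sum_small_implies_many_small_general (m : ℕ) (hm : 1 ≤ m)
    {Ω : Type*} [MeasurableSpace Ω] (ℙ : Measure Ω)
    (E : Fin m → Ω → ℝ) (hmeas : ∀ j, Measurable (E j))
    (hindep : ProbabilityTheory.iIndepFun E ℙ)
    (hident : ∀ j, ℙ.map (E j) = ℙ.map (E ⟨0, hm⟩))
    (hnonneg : ∀ j, ∀ᵐ ω ∂ℙ, 0 ≤ E j ω)
    (s : ℝ) :
    ℙ {ω | ∑ j, E j ω ≤ s}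
      ≤ (m.choose ((m + 1) / 2)) *
        ℙ {ω | E ⟨0, hm⟩ ω ≤ 2 * s / m} ^ ((m + 1) / 2) := by
  have hsame : ∀ j, ℙ (E j ⁻¹' Set.Iic (2 * s / m)) = ℙ (E ⟨0, hm⟩ ⁻¹' Set.Iic (2 * s / m)) := by
    intro j
    rw [← Measure.map_apply (hmeas j) measurableSet_Iic, hident j,
      Measure.map_apply (hmeas _) measurableSet_Iic]
  have hmany : {ω | ∑ j, E j ω ≤ s} ≤ᶠ[ae ℙ] {ω | (m + 1) / 2 ≤ #{j | E j ω ≤ 2 * s / m}} := by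
    filter_upwards [ae_all_iff.mpr hnonneg] with ω hω hsum
    have hcount := add_one_div_two_le_card_filter_le_of_sum_le hω hsum
    rw [Fintype.card_fin] at hcount
    exact hcount
  refine (measure_mono_ae hmany).trans ?_
  have hbound := hindep.measure_le_card_filter_mem_le measurableSet_Iic hsame ((m + 1) / 2)
  rw [Fintype.card_fin] at hbound
  exact hbound

/-- If `E_1, …, E_m` are i.i.d. almost surely nonnegative real random variables, then for
every `s ≥ 0`, `P(Σⱼ Eⱼ ≤ s) ≤ C(m, ⌈m/2⌉) · P(E_1 ≤ 2s/m)^{⌈m/2⌉}`, where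
`⌈m/2⌉ = (m+1)/2` (in ℕ) and `C(·,·)` is the binomial coefficient. -/
theorem sum_small_implies_many_small (m : ℕ) (hm : 1 ≤ m)
    {Ω : Type*} [MeasurableSpace Ω] (ℙ : Measure Ω) [IsProbabilityMeasure ℙ]
    (E : Fin m → Ω → ℝ) (hmeas : ∀ j, Measurable (E j))
    (hindep : ProbabilityTheory.iIndepFun E ℙ)
    (hident : ∀ j, ℙ.map (E j) = ℙ.map (E ⟨0, hm⟩))
    (hnonneg : ∀ j, ∀ᵐ ω ∂ℙ, 0 ≤ E j ω)
    (s : ℝ) (hs : 0 ≤ s) :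
    ℙ {ω | ∑ j, E j ω ≤ s}
      ≤ (m.choose ((m + 1) / 2)) *
        ℙ {ω | E ⟨0, hm⟩ ω ≤ 2 * s / m} ^ ((m + 1) / 2) :=
  sum_small_implies_many_small_general m hm ℙ E hmeas hindep hident hnonneg s
end

section
/- There exists k₀ ∈ ℕ such that for all integers k ≥ k₀ the following holds. Let U_1, …, U_{k−1} be independent random variables, each uniformly distributed on [1/2, 1]. Then P( ∏_{j=1}^{k−1} U_j ≥ 1/(5k) ) ≤ exp( −((k−1)/2)·( log(k−1) − log(4 log 5) − log log k − log(2e) ) ), where log denotes the natural logarithm. -/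
open MeasureTheory
open scoped ENNReal

/-!
Apply Markov's inequality to the `s`-th power of the product, with `s = ⌊k / 4⌋`. By independence
`E[(∏ Uⱼ)^s] = ∏ E[Uⱼ^s]`, and `E[U^s] ≤ 2 ∫₀¹ x^s dx = 2 / (s + 1)`, so the probability is at most
`(2 / (s + 1))^(k-1) (5k)^s`. As `s + 1 ≥ k / 4`, the logarithm of this bound is
`-(3/4) k log k + O(k)`, far below the target exponent `-(k/2) log k + O(k log log k)`; crude
numerical bounds on `log 2` and `log 5` make this precise as soon as `k ≥ 256`.
-/

theorem enorm_finset_prod {ι α : Type*} [NormedCommRing α] [NormMulClass α] [NormOneClass α]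
    (s : Finset ι) (f : ι → α) : ‖∏ i ∈ s, f i‖ₑ = ∏ i ∈ s, ‖f i‖ₑ := by
  simp only [enorm_eq_nnnorm, nnnorm_prod, ENNReal.ofNNReal_finsetProd]

theorem ProbabilityTheory.iIndepFun.meas_le_prod_le_div_pow {Ω ι : Type*} [MeasurableSpace Ω]
    {μ : Measure Ω} [Fintype ι] {U : ι → Ω → ℝ} (hind : iIndepFun U μ)
    (hU : ∀ i, Measurable (U i)) {t : ℝ} (ht : 0 < t) (s : ℕ) :
    μ {ω | t ≤ ∏ i, U i ω} ≤ (∏ i, ∫⁻ ω, ‖U i ω‖ₑ ^ s ∂μ) / ENNReal.ofReal t ^ s := by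
  have hmeas : ∀ i, Measurable fun ω ↦ ‖U i ω‖ₑ ^ s := fun i ↦ (hU i).enorm.pow_const s
  calc μ {ω | t ≤ ∏ i, U i ω}
      ≤ μ {ω | ENNReal.ofReal t ^ s ≤ ∏ i, ‖U i ω‖ₑ ^ s} := by
        refine measure_mono fun ω (hω : t ≤ _) ↦ ?_
        have ht_le : ENNReal.ofReal t ≤ ‖∏ i, U i ω‖ₑ := by
          rw [Real.enorm_eq_ofReal_abs]
          exact ENNReal.ofReal_le_ofReal (hω.trans (le_abs_self _))
        simpa only [Set.mem_ofPred_eq, Finset.prod_pow, enorm_finset_prod]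
          using pow_le_pow_left' ht_le s
    _ ≤ (∫⁻ ω, ∏ i, ‖U i ω‖ₑ ^ s ∂μ) / ENNReal.ofReal t ^ s :=
        meas_ge_le_lintegral_div (Finset.measurable_prod _ fun i _ ↦ hmeas i).aemeasurable
          (by positivity) (by simp)
    _ = (∏ i, ∫⁻ ω, ‖U i ω‖ₑ ^ s ∂μ) / ENNReal.ofReal t ^ s := by
        congr 1
        exact lintegral_prod_eq_prod_lintegral_of_indepFun _ _
          (hind.comp (fun _ x ↦ ‖x‖ₑ ^ s) fun _ ↦ measurable_enorm.pow_const s) hmeas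

theorem lintegral_enorm_pow_Icc_zero_one (s : ℕ) :
    ∫⁻ x in Set.Icc (0 : ℝ) 1, ‖x‖ₑ ^ s = ENNReal.ofReal (1 / (s + 1)) := by
  have hint : IntegrableOn (fun x : ℝ ↦ x ^ s) (Set.Icc 0 1) :=
    (continuous_pow s).continuousOn.integrableOn_compact isCompact_Icc
  simp_rw [← enorm_pow]
  rw [← ofReal_integral_norm_eq_lintegral_enorm hint, integral_Icc_eq_integral_Ioc,
    ← intervalIntegral.integral_of_le zero_le_one,
    intervalIntegral.integral_congr (g := fun x : ℝ ↦ x ^ s) fun x hx ↦ ?_, integral_pow]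
  · simp
  · rw [Set.uIcc_of_le zero_le_one] at hx
    exact Real.norm_of_nonneg (pow_nonneg hx.1 s)

theorem lintegral_enorm_pow_uniform_le (s : ℕ) :
    ∫⁻ x, ‖x‖ₑ ^ s ∂((2 : ℝ≥0∞) • volume.restrict (Set.Icc (1 / 2 : ℝ) 1))
      ≤ ENNReal.ofReal (2 / (s + 1)) := by
  rw [lintegral_smul_measure, div_eq_mul_one_div (2 : ℝ), ENNReal.ofReal_mul zero_le_two,
    ENNReal.ofReal_ofNat, ← lintegral_enorm_pow_Icc_zero_one, smul_eq_mul]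
  gcongr
  norm_num

open Real in
theorem tail_exponent_le {K s : ℝ} (hK : 256 ≤ K) (hs_lower : K / 4 ≤ s + 1)
    (hs_upper : s ≤ K / 4) :
    (K - 1) * log (2 / (s + 1)) + s * log (5 * K) ≤
      -((K - 1) / 2) * (log (K - 1) - log (4 * log 5) - log (log K) - log (2 * exp 1)) := by
  have hlog4 : log 4 = 2 * log 2 := calc
    log 4 = log (2 ^ 2) := by norm_num
    _ = 2 * log 2 := by rw [Real.log_pow]; norm_num
  have hlogK : 8 * log 2 ≤ log K := calc
    8 * log 2 = log (2 ^ 8) := by rw [Real.log_pow]; norm_num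
    _ ≤ log K := Real.log_le_log (by norm_num) (by linarith)
  have hlog2 : log 2 < 0.7 := log_two_lt_d9.trans (by norm_num)
  have hlog5 : log 5 ≤ 3 * log 2 := calc
    log 5 ≤ log (2 ^ 3) := Real.log_le_log (by norm_num) (by norm_num)
    _ = 3 * log 2 := by rw [Real.log_pow]; norm_num
  have hlog5_ge : 1 ≤ log 5 := by
    rw [Real.le_log_iff_exp_le (by norm_num)]
    linarith [exp_one_lt_d9]
  have hlhs : (K - 1) * log (2 / (s + 1)) + s * log (5 * K) ≤
      3 * (K - 1) * log 2 - (K - 1) * log K + K / 4 * (log 5 + log K) := by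
    have hlog_s : log K - 2 * log 2 ≤ log (s + 1) := by
      rw [← hlog4, ← Real.log_div (by positivity) (by norm_num)]
      exact Real.log_le_log (by positivity) hs_lower
    rw [Real.log_div (by norm_num) (by linarith), Real.log_mul (by norm_num) (by positivity)]
    have : 0 ≤ log 5 + log K := by linarith
    nlinarith
  have hrhs : log (K - 1) - log (4 * log 5) - log (log K) - log (2 * exp 1) ≤
      log K - 3 * log 2 - 1 := by
    have h1 : log (K - 1) ≤ log K := Real.log_le_log (by linarith) (by linarith)
    have h2 : log 4 ≤ log (4 * log 5) := Real.log_le_log (by norm_num) (by linarith)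
    have h3 : 0 ≤ log (log K) := Real.log_nonneg (by linarith)
    rw [Real.log_mul (by norm_num) (exp_pos 1).ne', Real.log_exp]
    linarith
  -- After `hlhs` and `hrhs` the gap between the two sides is `(K - 2) / 4 * log K - O(K)`.
  nlinarith

/-- There exists `k₀` such that for all `k ≥ k₀`: if `U_1, …, U_{k−1}` are independent
random variables, each uniform on `[1/2,1]`, then
`P(∏ⱼ Uⱼ ≥ 1/(5k)) ≤ exp(−((k−1)/2)·(log(k−1) − log(4 log 5) − log log k − log(2e)))`. -/
theorem prod_uniform_large_tail :
    ∃ k₀ : ℕ, ∀ k : ℕ, k₀ ≤ k →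
      ∀ {Ω : Type} [MeasurableSpace Ω] (ℙ : Measure Ω) [IsProbabilityMeasure ℙ]
        (U : Fin (k - 1) → Ω → ℝ), (∀ j, Measurable (U j)) →
        ProbabilityTheory.iIndepFun U ℙ →
        (∀ j, ℙ.map (U j) = (2 : ℝ≥0∞) • volume.restrict (Set.Icc (1 / 2 : ℝ) 1)) →
        ℙ {ω | 1 / (5 * k) ≤ ∏ j, U j ω}
          ≤ ENNReal.ofReal (Real.exp (-(((k : ℝ) - 1) / 2) *
              (Real.log ((k : ℝ) - 1) - Real.log (4 * Real.log 5)
                - Real.log (Real.log k) - Real.log (2 * Real.exp 1)))) := by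
  refine ⟨256, fun k hk Ω _ ℙ _ U hU hind hmap ↦ ?_⟩
  set s := k / 4
  have hK : (256 : ℝ) ≤ k := by exact_mod_cast hk
  have hs : (k : ℝ) / 4 ≤ s + 1 := by
    have : (k : ℝ) ≤ 4 * s + 4 := by exact_mod_cast (by omega : k ≤ 4 * s + 4)
    linarith
  have hmoment : ∀ j, ∫⁻ ω, ‖U j ω‖ₑ ^ s ∂ℙ ≤ ENNReal.ofReal (2 / (s + 1)) := fun j ↦ by
    rw [← lintegral_map (measurable_enorm.pow_const s) (hU j), hmap j]
    exact lintegral_enorm_pow_uniform_le s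
  calc ℙ {ω | 1 / (5 * k) ≤ ∏ j, U j ω}
      ≤ (∏ j, ∫⁻ ω, ‖U j ω‖ₑ ^ s ∂ℙ) / ENNReal.ofReal (1 / (5 * k)) ^ s :=
        hind.meas_le_prod_le_div_pow hU (by positivity) s
    _ ≤ ENNReal.ofReal (2 / (s + 1)) ^ (k - 1) / ENNReal.ofReal (1 / (5 * k)) ^ s := by
        gcongr
        simpa using Finset.prod_le_pow_card Finset.univ _ _ fun j _ ↦ hmoment j
    _ = ENNReal.ofReal ((2 / (s + 1)) ^ (k - 1) * (5 * k) ^ s) := by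
        rw [← ENNReal.ofReal_pow (by positivity), ← ENNReal.ofReal_pow (by positivity),
          ← ENNReal.ofReal_div_of_pos (by positivity), one_div_pow, div_div_eq_mul_div, div_one]
    _ ≤ _ := by
        refine ENNReal.ofReal_le_ofReal ?_
        rw [← Real.log_le_iff_le_exp (by positivity), Real.log_mul (by positivity) (by positivity),
          Real.log_pow, Real.log_pow, Nat.cast_sub (by omega), Nat.cast_one]
        exact tail_exponent_le hK hs (Nat.cast_div_le.trans_eq (by norm_num))
end

section
/- Let d ≥ 1 and K ≥ 1 be integers and set r = 1/(4K+4). Let i_1, …, i_{K+1} ∈ {1, …, d} and let w_1, …, w_{K+1} ∈ ℝ^d be vectors such that for each t, the coordinate w_t(i_t) lies in the open interval (r, 2r) and every other coordinate w_t(j), j ≠ i_t, lies in (0, r). Let π : ℝ^d → T^d = (ℝ/ℤ)^d be the quotient map, fix x_1 ∈ T^d arbitrary, and define x_{t+1} = x_t + π(w_t) for t = 1, …, K+1. Then for every t ∈ {1, …, K+1}: (a) the torus Euclidean distance d(x_{t+1}, x_t) equals ‖w_t‖₂, and (b) for every s with 1 ≤ s < t, d(x_{t+1}, x_t) < d(x_{t+1},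 x_s); that is, the nearest point to x_{t+1} among x_1, …, x_t is x_t. -/
/-- The `d`-dimensional flat torus `(ℝ/ℤ)^d`, equipped with the torus Euclidean
distance `d(x,y) = (Σᵢ min(|xᵢ−yᵢ|, 1−|xᵢ−yᵢ|)²)^{1/2}`. -/
noncomputable abbrev Torus (d : ℕ) : Type := PiLp 2 (fun _ : Fin d => AddCircle (1 : ℝ))

/-- The coordinatewise quotient map `π : ℝ^d → T^d`. -/
noncomputable def torusMk (d : ℕ) (x : Fin d → ℝ) : Torus d :=
  WithLp.toLp 2 (fun i => (x i : AddCircle (1 : ℝ)))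

/-!
Every coordinate of every step lies in `(0, 1/(2K+2))`, so a run of at most `K + 1` consecutive
steps has all coordinates in `(0, 1/2]`: nothing wraps around the torus, and the torus distance
from `x_s` to `x_{t+1}` is the Euclidean norm of `w_s + ⋯ + w_t`. For `s < t` this sum exceeds
`w_t` strictly in every coordinate, because all coordinates are positive.
-/

open Finset

lemma torusMk_add (d : ℕ) (v w : Fin d → ℝ) :
    torusMk d (v + w) = torusMk d v + torusMk d w := by
  ext j
  simp [torusMk]

lemma torusMk_sum (d : ℕ) {ι : Type*} (s : Finset ι) (v : ι → Fin d → ℝ) :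
    torusMk d (∑ u ∈ s, v u) = ∑ u ∈ s, torusMk d (v u) :=
  map_sum (AddMonoidHom.mk' (torusMk d) (torusMk_add d)) v s

/-- Coordinates in `[0, 1/2]` are their own distance to `0` in `ℝ/ℤ`. -/
lemma norm_torusMk (d : ℕ) (v : Fin d → ℝ) (hv : ∀ j, 0 ≤ v j ∧ v j ≤ 1 / 2) :
    ‖torusMk d v‖ = √(∑ j, v j ^ 2) := by
  have hcoord : ∀ j, ‖(v j : AddCircle (1 : ℝ))‖ = v j := fun j => by
    rw [(AddCircle.norm_coe_eq_abs_iff (1 : ℝ) one_ne_zero).2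
      (by rw [abs_of_nonneg (hv j).1, abs_one]; exact (hv j).2), abs_of_nonneg (hv j).1]
  simp only [torusMk, PiLp.norm_eq_of_L2, hcoord]

lemma sum_Ico_le_succ_mul {f : ℕ → ℝ} {K : ℕ} {c : ℝ} (hf : ∀ u ≤ K, 0 ≤ f u ∧ f u ≤ c)
    {s t : ℕ} (ht : t ≤ K) : ∑ u ∈ Ico s (t + 1), f u ≤ (K + 1) * c := by
  have hsub : Ico s (t + 1) ⊆ range (K + 1) := fun u hu => by
    simp only [mem_Ico, mem_range] at hu ⊢; omega
  calc ∑ u ∈ Ico s (t + 1), f u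
      ≤ ∑ u ∈ range (K + 1), f u :=
        sum_le_sum_of_subset_of_nonneg hsub fun u hu _ =>
          (hf u (by simp only [mem_range] at hu; omega)).1
    _ ≤ (range (K + 1)).card • c :=
        sum_le_card_nsmul _ _ _ fun u hu => (hf u (by simp only [mem_range] at hu; omega)).2
    _ = (K + 1) * c := by simp [nsmul_eq_mul]

lemma sqrt_sum_sq_lt_sqrt_sum_sq {ι : Type*} [Fintype ι] [Nonempty ι] {a b : ι → ℝ}
    (ha : ∀ j, 0 ≤ a j) (hab : ∀ j, a j < b j) : √(∑ j, a j ^ 2) < √(∑ j, b j ^ 2) :=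
  Real.sqrt_lt_sqrt (sum_nonneg fun _ _ => sq_nonneg _) <|
    sum_lt_sum_of_nonempty univ_nonempty fun j _ => pow_lt_pow_left₀ (hab j) (ha j) two_ne_zero

section Staircase

variable {d K : ℕ} {w : ℕ → Fin d → ℝ} {x : ℕ → Torus d}

lemma sub_eq_torusMk_sum_Ico (hx : ∀ t ≤ K, x (t + 1) = x t + torusMk d (w t)) {s t : ℕ}
    (hst : s ≤ t) (ht : t ≤ K) : x (t + 1) - x s = torusMk d (∑ u ∈ Ico s (t + 1), w u) := by
  rw [torusMk_sum, ← sum_Ico_sub x (by omega : s ≤ t + 1)]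
  refine sum_congr rfl fun u hu => ?_
  rw [hx u (by simp only [mem_Ico] at hu; omega), add_sub_cancel_left]

lemma dist_eq_sqrt_sum_sq_sum_Ico (hw : ∀ u ≤ K, ∀ j, 0 ≤ w u j ∧ w u j ≤ 1 / (2 * (K + 1)))
    (hx : ∀ t ≤ K, x (t + 1) = x t + torusMk d (w t)) {s t : ℕ} (hst : s ≤ t) (ht : t ≤ K) :
    dist (x (t + 1)) (x s) = √(∑ j, (∑ u ∈ Ico s (t + 1), w u j) ^ 2) := by
  rw [dist_eq_norm, sub_eq_torusMk_sum_Ico hx hst ht, norm_torusMk]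
  · simp only [Finset.sum_apply]
  intro j
  simp only [Finset.sum_apply]
  refine ⟨sum_nonneg fun u hu => (hw u (by simp only [mem_Ico] at hu; omega) j).1, ?_⟩
  calc ∑ u ∈ Ico s (t + 1), w u j ≤ (K + 1) * (1 / (2 * (K + 1))) :=
        sum_Ico_le_succ_mul (fun u hu => hw u hu j) ht
    _ = 1 / 2 := by field_simp

end Staircase

theorem torus_staircase_nearest_neighbor_general (d K : ℕ) (hd : 1 ≤ d)
    (r : ℝ) (hr : r = 1 / (4 * K + 4))
    (i : ℕ → Fin d) (w : ℕ → Fin d → ℝ)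
    (hw : ∀ t : ℕ, t ≤ K →
      (r < w t (i t) ∧ w t (i t) < 2 * r) ∧
      (∀ j : Fin d, j ≠ i t → 0 < w t j ∧ w t j < r))
    (x : ℕ → Torus d)
    (hx : ∀ t : ℕ, t ≤ K → x (t + 1) = x t + torusMk d (w t)) :
    ∀ t : ℕ, t ≤ K →
      dist (x (t + 1)) (x t) = Real.sqrt (∑ j, (w t j) ^ 2) ∧
      ∀ s : ℕ, s < t → dist (x (t + 1)) (x t) < dist (x (t + 1)) (x s) := by
  have hr0 : 0 < r := by rw [hr]; positivity
  have hstep : ∀ u ≤ K, ∀ j, 0 < w u j ∧ w u j < 2 * r := fun u hu j => by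
    obtain ⟨⟨hlo, hhi⟩, hother⟩ := hw u hu
    by_cases hj : j = i u
    · subst hj; exact ⟨hr0.trans hlo, hhi⟩
    · obtain ⟨hlo', hhi'⟩ := hother j hj; exact ⟨hlo', by linarith⟩
  have h2r : 2 * r = 1 / (2 * (K + 1)) := by rw [hr]; field_simp; ring
  have hstep_le : ∀ u ≤ K, ∀ j, 0 ≤ w u j ∧ w u j ≤ 1 / (2 * (K + 1)) :=
    fun u hu j => ⟨(hstep u hu j).1.le, h2r ▸ (hstep u hu j).2.le⟩
  intro t ht
  have hlast : dist (x (t + 1)) (x t) = √(∑ j, w t j ^ 2) := by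
    simp [dist_eq_sqrt_sum_sq_sum_Ico hstep_le hx le_rfl ht, Nat.Ico_succ_singleton]
  refine ⟨hlast, fun s hs => ?_⟩
  have : NeZero d := ⟨by omega⟩
  rw [hlast, dist_eq_sqrt_sum_sq_sum_Ico hstep_le hx hs.le ht]
  refine sqrt_sum_sq_lt_sqrt_sum_sq (fun j => (hstep t ht j).1.le) fun j => ?_
  rw [sum_Ico_succ_top hs.le, lt_add_iff_pos_left]
  exact sum_pos (fun u hu => (hstep u (by simp only [mem_Ico] at hu; omega) j).1)
    ⟨s, by simp only [mem_Ico]; omega⟩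

/-- The higher-dimensional lower-bound construction. Set `r = 1/(4K+4)`. Steps
`w_t ∈ ℝ^d` (for `t = 0,…,K`, the paper's `w_1,…,w_{K+1}`) have coordinate `i_t` in
`(r, 2r)` and all other coordinates in `(0, r)`; points are `x_{t+1} = x_t + π(w_t)`
(with `x 0` the paper's `x_1`, arbitrary). Then for every `t ≤ K`:
(a) the torus distance `d(x_{t+1}, x_t)` equals the Euclidean norm `‖w_t‖₂`, and
(b) for every `s < t`, `d(x_{t+1}, x_t) < d(x_{t+1}, x_s)`, so the nearest point to
`x_{t+1}` among the previous points is `x_t`. -/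
theorem torus_staircase_nearest_neighbor (d K : ℕ) (hd : 1 ≤ d) (hK : 1 ≤ K)
    (r : ℝ) (hr : r = 1 / (4 * K + 4))
    (i : ℕ → Fin d) (w : ℕ → Fin d → ℝ)
    (hw : ∀ t : ℕ, t ≤ K →
      (r < w t (i t) ∧ w t (i t) < 2 * r) ∧
      (∀ j : Fin d, j ≠ i t → 0 < w t j ∧ w t j < r))
    (x : ℕ → Torus d)
    (hx : ∀ t : ℕ, t ≤ K → x (t + 1) = x t + torusMk d (w t)) :
    ∀ t : ℕ, t ≤ K →
      dist (x (t + 1)) (x t) = Real.sqrt (∑ j, (w t j) ^ 2) ∧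
      ∀ s : ℕ, s < t → dist (x (t + 1)) (x t) < dist (x (t + 1)) (x s) :=
  torus_staircase_nearest_neighbor_general d K hd r hr i w hw x hx
end

section
/- Let d ≥ 1 and K ≥ 1 be integers and set r = 1/(4K+4). For x ∈ T^d = (ℝ/ℤ)^d and i ∈ {1,…,d}, let C(x, i, r) ⊆ T^d be the open box of points y such that (in representatives) x_i + r < y_i < x_i + 2r in coordinate i and x_j < y_j < x_j + r in every coordinate j ≠ i. Let X_1, …, X_{K+2} be independent random points, each distributed according to the Haar probability measure on T^d. Then the probability that there exists a string (i_1, …, i_{K+1}) ∈ {1,…,d}^{K+1} with X_{t+1} ∈ C(X_t, i_t, r) for every t ∈ {1, …, K+1} equals d^{K+1}·(4K+4)^{−d(K+1)}. (For each fixed x, the boxes C(x, 1, r), …, C(x, d, r) are pairwise disjoint and each has measure r^d.) -/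
/-! The event says that `(X_1, …, X_{K+2})` is a chain for the relation `y ∈ ⋃ᵢ C(x, i, r)`.
For i.i.d. points, integrating out the last point shows that chains of length `n` for a relation
all of whose sections have measure `c` have probability `cⁿ`. Here every section is a translate
of `d` boxes of volume `r^d`, pairwise disjoint because in coordinate `i` the box `C(x, i, r)`
occupies the arc `(r, 2r)` and every other box the arc `(0, r)`, and these arcs do not overlap
on the circle since `2r ≤ 1`. Hence `c = d rᵈ` and the probability is `(d rᵈ)^{K+1}`. -/

open MeasureTheory
open scoped ENNReal

/-- The Haar probability measure on the torus. -/
noncomputable instance (d : ℕ) : MeasureSpace (Torus d) :=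
  { volume := (volume : Measure (∀ _ : Fin d, AddCircle (1 : ℝ))).map (WithLp.toLp 2) }

/-- `y` lies in the open box `C(x, i, r) ⊆ T^d`: in representatives,
`xᵢ + r < yᵢ < xᵢ + 2r` in coordinate `i` and `xⱼ < yⱼ < xⱼ + r` in every other
coordinate `j`. -/
def inTorusBox (d : ℕ) (r : ℝ) (x : Torus d) (i : Fin d) (y : Torus d) : Prop :=
  ∃ u : Fin d → ℝ, y = x + torusMk d u ∧ (r < u i ∧ u i < 2 * r) ∧
    ∀ j : Fin d, j ≠ i → 0 < u j ∧ u j < r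


open Set

section Chain

variable {α : Type*} {R : Set (α × α)}

def chainSet (R : Set (α × α)) (n : ℕ) : Set (Fin (n + 1) → α) :=
  {f | ∀ t : Fin n, (f t.castSucc, f t.succ) ∈ R}

lemma snoc_mem_chainSet_iff {n : ℕ} (g : Fin (n + 1) → α) (y : α) :
    Fin.snoc g y ∈ chainSet R (n + 1) ↔ g ∈ chainSet R n ∧ (g (Fin.last n), y) ∈ R := by
  simp [chainSet, Fin.forall_fin_succ', Fin.succ_castSucc, -Fin.castSucc_succ]

variable [MeasurableSpace α]

lemma measurableSet_chainSet (hR : MeasurableSet R) (n : ℕ) : MeasurableSet (chainSet R n) := by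
  simp only [chainSet, ofPred_forall]
  exact .iInter fun t => ((measurable_pi_apply _).prodMk (measurable_pi_apply _)) hR

lemma measure_pi_chainSet (μ : Measure α) [IsProbabilityMeasure μ] (hR : MeasurableSet R)
    {c : ℝ≥0∞} (hc : ∀ x, μ (Prod.mk x ⁻¹' R) = c) (n : ℕ) :
    Measure.pi (fun _ : Fin (n + 1) => μ) (chainSet R n) = c ^ n := by
  induction n with
  | zero => simp [chainSet]
  | succ n ih =>
    let e := MeasurableEquiv.piFinSuccAbove (fun _ : Fin (n + 2) => α) (Fin.last (n + 1))
    have he : ∀ y g, e.symm (y, g) = Fin.snoc g y := fun y g => Fin.insertNth_last' y g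
    have hsection : ∀ g, μ ((·, g) ⁻¹' (e.symm ⁻¹' chainSet R (n + 1))) =
        (chainSet R n).indicator (fun _ => c) g := by
      intro g
      have hpre : (·, g) ⁻¹' (e.symm ⁻¹' chainSet R (n + 1)) =
          {y | g ∈ chainSet R n ∧ (g (Fin.last n), y) ∈ R} := by
        ext y
        simp only [mem_preimage, he, snoc_mem_chainSet_iff, mem_ofPred_eq]
      by_cases hg : g ∈ chainSet R n
      · simp only [hpre, hg, true_and, indicator_of_mem]
        exact hc (g (Fin.last n))
      · simp [hpre, hg]
    rw [← ((measurePreserving_piFinSuccAbove (fun _ => μ) (Fin.last (n + 1))).symm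
        e).measure_preimage_equiv, Measure.prod_apply_symm
        (e.symm.measurable (measurableSet_chainSet hR _)), lintegral_congr hsection,
      lintegral_indicator_const (measurableSet_chainSet hR n), ih, pow_succ, mul_comm]

end Chain

namespace AddCircle

variable {T : ℝ} [Fact (0 < T)]

lemma injOn_coe_Ioc (a : ℝ) : InjOn ((↑) : ℝ → AddCircle T) (Ioc a (a + T)) :=
  fun _ hx _ hy h => (coe_eq_coe_iff_of_mem_Ioc hx hy).1 h

lemma coe_image_eq_preimage_equivIoc {a : ℝ} {s : Set ℝ} (hs : s ⊆ Ioc a (a + T)) :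
    ((↑) '' s : Set (AddCircle T)) = (fun y => (equivIoc T a y : ℝ)) ⁻¹' s := by
  ext y
  constructor
  · rintro ⟨x, hx, rfl⟩
    simpa [equivIoc_coe_of_mem (hs hx)] using hx
  · intro hy
    exact ⟨_, hy, coe_equivIoc⟩

lemma volume_coe_image {a : ℝ} {s : Set ℝ} (hs : MeasurableSet s) (hsub : s ⊆ Ioc a (a + T)) :
    volume ((↑) '' s : Set (AddCircle T)) = volume s := by
  have hmeas : MeasurableSet ((↑) '' s : Set (AddCircle T)) := by
    rw [coe_image_eq_preimage_equivIoc hsub]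
    exact (measurable_subtype_coe.comp (measurableEquivIoc T a).measurable) hs
  rw [add_projection_respects_measure T a hmeas, (injOn_coe_Ioc a).preimage_image_inter hsub]

end AddCircle

instance : IsProbabilityMeasure (volume : Measure UnitAddCircle) :=
  ⟨UnitAddCircle.measure_univ⟩

instance (d : ℕ) : IsProbabilityMeasure (volume : Measure (Torus d)) :=
  Measure.isProbabilityMeasure_map (WithLp.measurable_toLp 2 _).aemeasurable

lemma measurePreserving_torus_ofLp (d : ℕ) :
    MeasurePreserving (WithLp.ofLp : Torus d → Fin d → UnitAddCircle) volume volume := by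
  refine ⟨WithLp.measurable_ofLp 2 _, ?_⟩
  rw [show (volume : Measure (Torus d)) = volume.map (WithLp.toLp 2) from rfl,
    Measure.map_map (WithLp.measurable_ofLp 2 _) (WithLp.measurable_toLp 2 _)]
  exact Measure.map_id

lemma measurePreserving_ofLp_sub {d : ℕ} (x : Torus d) :
    MeasurePreserving (fun y : Torus d => WithLp.ofLp (y - x)) volume volume :=
  (measurePreserving_sub_right volume (WithLp.ofLp x)).comp (measurePreserving_torus_ofLp d)

section Staircase

variable {d : ℕ} {r : ℝ}

def staircaseInterval (r : ℝ) (i j : Fin d) : Set ℝ :=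
  if j = i then Ioo r (2 * r) else Ioo 0 r

def staircaseBox (r : ℝ) (i : Fin d) : Set (Fin d → UnitAddCircle) :=
  univ.pi fun j => (↑) '' staircaseInterval r i j

lemma inTorusBox_iff_ofLp_sub_mem {x y : Torus d} {i : Fin d} :
    inTorusBox d r x i y ↔ WithLp.ofLp (y - x) ∈ staircaseBox r i := by
  simp only [inTorusBox, staircaseBox, mem_univ_pi, staircaseInterval]
  constructor
  · rintro ⟨u, rfl, hui, hu⟩ j
    refine ⟨u j, ?_, by simp [torusMk]⟩
    split_ifs with hj
    · exact hj ▸ hui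
    · exact hu j hj
  · intro h
    choose u hu hux using h
    refine ⟨u, ?_, by simpa using hu i, fun j hj => by simpa [hj] using hu j⟩
    ext j
    simp [torusMk, hux]

lemma isOpen_staircaseBox (i : Fin d) : IsOpen (staircaseBox r i) := by
  refine isOpen_set_pi finite_univ fun j _ => QuotientAddGroup.isOpenMap_coe _ ?_
  unfold staircaseInterval
  split_ifs <;> exact isOpen_Ioo

lemma staircaseInterval_subset_Ioc (hr0 : 0 ≤ r) (hr1 : 2 * r ≤ 1) (i j : Fin d) :
    staircaseInterval r i j ⊆ Ioc 0 (0 + 1) := by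
  unfold staircaseInterval
  split_ifs
  · exact fun t ht => ⟨hr0.trans_lt ht.1, by linarith [ht.2]⟩
  · exact fun t ht => ⟨ht.1, by linarith [ht.2]⟩

lemma measurableSet_staircaseInterval (i j : Fin d) :
    MeasurableSet (staircaseInterval r i j) := by
  unfold staircaseInterval
  split_ifs <;> exact measurableSet_Ioo

lemma volume_staircaseInterval (i j : Fin d) :
    volume (staircaseInterval r i j) = ENNReal.ofReal r := by
  unfold staircaseInterval
  split_ifs <;> simp [two_mul]

lemma volume_staircaseBox (hr0 : 0 ≤ r) (hr1 : 2 * r ≤ 1) (i : Fin d) :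
    volume (staircaseBox r i) = ENNReal.ofReal r ^ d := by
  have hcoord (j : Fin d) : volume ((↑) '' staircaseInterval r i j : Set UnitAddCircle) =
      ENNReal.ofReal r := by
    rw [AddCircle.volume_coe_image (measurableSet_staircaseInterval i j)
      (staircaseInterval_subset_Ioc hr0 hr1 i j), volume_staircaseInterval]
  simp [staircaseBox, volume_pi_pi, hcoord]

open Function in
lemma pairwise_disjoint_staircaseBox (hr0 : 0 ≤ r) (hr1 : 2 * r ≤ 1) :
    Pairwise (Disjoint on staircaseBox (d := d) r) := by
  intro i i' hii'
  refine disjoint_univ_pi.2 ⟨i, ?_⟩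
  refine Disjoint.image ?_ (AddCircle.injOn_coe_Ioc 0) (staircaseInterval_subset_Ioc hr0 hr1 i i)
    (staircaseInterval_subset_Ioc hr0 hr1 i' i)
  simp [staircaseInterval, if_neg hii']

variable (d r) in
def torusStaircaseRel : Set (Torus d × Torus d) :=
  {p | ∃ i, inTorusBox d r p.1 i p.2}

lemma torusStaircaseRel_eq_preimage :
    torusStaircaseRel d r = (fun p => WithLp.ofLp (p.2 - p.1)) ⁻¹' ⋃ i, staircaseBox r i := by
  ext p
  simp [torusStaircaseRel, inTorusBox_iff_ofLp_sub_mem]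

lemma measurableSet_torusStaircaseRel : MeasurableSet (torusStaircaseRel d r) := by
  rw [torusStaircaseRel_eq_preimage]
  have hsub : Measurable fun p : Torus d × Torus d => WithLp.ofLp (p.2 - p.1) := by
    simp only [WithLp.ofLp_sub]
    fun_prop
  exact hsub (.iUnion fun i => (isOpen_staircaseBox i).measurableSet)

lemma volume_torusStaircaseRel_section (hr0 : 0 ≤ r) (hr1 : 2 * r ≤ 1) (x : Torus d) :
    volume (Prod.mk x ⁻¹' torusStaircaseRel d r) = d * ENNReal.ofReal r ^ d := by
  have hbox (i : Fin d) := (isOpen_staircaseBox (r := r) i).measurableSet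
  rw [torusStaircaseRel_eq_preimage]
  change volume ((fun y : Torus d => WithLp.ofLp (y - x)) ⁻¹' ⋃ i, staircaseBox r i) = _
  rw [(measurePreserving_ofLp_sub x).measure_preimage (MeasurableSet.iUnion hbox).nullMeasurableSet,
    measure_iUnion (pairwise_disjoint_staircaseBox hr0 hr1) hbox]
  simp [volume_staircaseBox hr0 hr1]

end Staircase

theorem prob_torus_staircase_general (d K : ℕ)
    (r : ℝ) (hr : r = 1 / (4 * K + 4))
    {Ω : Type} [MeasurableSpace Ω] (ℙ : Measure Ω) [IsProbabilityMeasure ℙ]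
    (X : Fin (K + 2) → Ω → Torus d) (hmeas : ∀ t, Measurable (X t))
    (hindep : ProbabilityTheory.iIndepFun X ℙ)
    (hlaw : ∀ t, ℙ.map (X t) = volume) :
    ℙ {ω | ∃ is : Fin (K + 1) → Fin d,
        ∀ t : Fin (K + 1), inTorusBox d r (X t.castSucc ω) (is t) (X t.succ ω)}
      = (d : ℝ≥0∞) ^ (K + 1) / ((4 * (K : ℝ≥0∞) + 4) ^ (d * (K + 1))) := by
  have hpos : (0 : ℝ) < 4 * K + 4 := by positivity
  have hr0 : 0 ≤ r := by rw [hr]; positivity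
  have hr1 : 2 * r ≤ 1 := by
    rw [hr, mul_one_div, div_le_one hpos]
    linarith [(Nat.cast_nonneg K : (0 : ℝ) ≤ K)]
  have hjoint : ℙ.map (fun ω t => X t ω) = Measure.pi fun _ => volume := by
    simp_rw [hindep.map_fun_eq_pi_map fun t => (hmeas t).aemeasurable, hlaw]
  have hevent : {ω | ∃ is : Fin (K + 1) → Fin d,
      ∀ t : Fin (K + 1), inTorusBox d r (X t.castSucc ω) (is t) (X t.succ ω)} =
      (fun ω t => X t ω) ⁻¹' chainSet (torusStaircaseRel d r) (K + 1) := by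
    ext ω
    simp [chainSet, torusStaircaseRel, Classical.skolem]
  have hofReal : ENNReal.ofReal r = (4 * (K : ℝ≥0∞) + 4)⁻¹ := by
    rw [hr, one_div, ENNReal.ofReal_inv_of_pos hpos]
    norm_cast
  rw [hevent, ← Measure.map_apply (measurable_pi_lambda _ hmeas)
      (measurableSet_chainSet measurableSet_torusStaircaseRel _), hjoint,
    measure_pi_chainSet volume measurableSet_torusStaircaseRel
      (volume_torusStaircaseRel_section hr0 hr1), hofReal, mul_pow, ← pow_mul,
    ← ENNReal.inv_pow, div_eq_mul_inv]

/-- If `X_1, …, X_{K+2}` are i.i.d. Haar-uniform points of the torus (indexed here by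
`Fin (K+2)`, with `t.castSucc` the paper's `x_t` and `t.succ` the paper's `x_{t+1}`) and
`r = 1/(4K+4)`, then the probability that there is a string `(i_1,…,i_{K+1}) ∈ [d]^{K+1}`
with `X_{t+1} ∈ C(X_t, i_t, r)` for every `t` equals `d^{K+1}·(4K+4)^{−d(K+1)}`. -/
theorem prob_torus_staircase (d K : ℕ) (hd : 1 ≤ d) (hK : 1 ≤ K)
    (r : ℝ) (hr : r = 1 / (4 * K + 4))
    {Ω : Type} [MeasurableSpace Ω] (ℙ : Measure Ω) [IsProbabilityMeasure ℙ]
    (X : Fin (K + 2) → Ω → Torus d) (hmeas : ∀ t, Measurable (X t))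
    (hindep : ProbabilityTheory.iIndepFun X ℙ)
    (hlaw : ∀ t, ℙ.map (X t) = volume) :
    ℙ {ω | ∃ is : Fin (K + 1) → Fin d,
        ∀ t : Fin (K + 1), inTorusBox d r (X t.castSucc ω) (is t) (X t.succ ω)}
      = (d : ℝ≥0∞) ^ (K + 1) / ((4 * (K : ℝ≥0∞) + 4) ^ (d * (K + 1))) :=
  prob_torus_staircase_general d K r hr ℙ X hmeas hindep hlaw
end
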